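/- Let Z₁ and W be independent standard normal random variables, ρ ∈ (-1, 1), and Z₂ = ρ Z₁ + √(1-ρ²) W, so that (Z₁, Z₂) is bivariate standard Gaussian with correlation ρ. Then lim_{u→1⁻} log P(Φ(Z₁) > u, Φ(Z₂) > u) / log(1 - u) = 2/(1 + ρ); that is, the coefficient of tail dependence of a bivariate Gaussian pair with correlation ρ is η_Z = (1 + ρ)/2. -/

import Mathlib

open MeasureTheory ProbabilityTheory Real Set Filter

/-- The standard normal distribution function. -/
noncomputable def Phi (z : ℝ) : ℝ :=
  ∫ t in Set.Iic z, (Real.sqrt (2 * Real.pi))⁻¹ * Real.exp (-(t ^ 2) / 2)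

/-- The transformation `g(z) = (1 - Φ(z))⁻¹ - 1`. -/
noncomputable def g (z : ℝ) : ℝ := (1 - Phi z)⁻¹ - 1

/-!
Write `T z = P(Z₁ > z) = 1 - Φ z` and `J z = P(Z₁ > z, Z₂ > z)`. Since `Φ` is a continuous
increasing bijection onto `(0, 1)`, substituting `u = Φ z` turns the claim into
`log J z / log T z → 2 / (1 + ρ)` as `z → ∞`, so it suffices to show `log T z / z² → -1/2` and
`log J z / z² → -1/(1 + ρ)`. The upper bounds are Chernoff bounds, for `Z₁` and, through
`Z₁ + Z₂ ≥ 2z`, for the centred Gaussian `Z₁ + Z₂` of variance `2(1 + ρ)`. For the lower bounds,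
the standard normal puts mass at least `φ(z + 1)` on `(z, z + 1]` when `z ≥ 0` (`φ` the density),
and the event of `J z` contains `{Z₁ ∈ (z, z + 1], √(1 - ρ²) W > (1 - ρ) z + 1}`, whose probability
is a product of two such masses by independence.
-/

open scoped NNReal Topology

lemma gaussianPDFReal_zero_one (x : ℝ) :
    gaussianPDFReal 0 1 x = (√(2 * π))⁻¹ * exp (-(x ^ 2) / 2) := by
  simp [gaussianPDFReal]

lemma gaussianPDFReal_zero_one_eq_exp (x : ℝ) :
    gaussianPDFReal 0 1 x = exp (-(x ^ 2) / 2 - log √(2 * π)) := by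
  rw [gaussianPDFReal_zero_one, exp_sub, exp_log (by positivity)]
  ring

lemma gaussianPDFReal_antitoneOn : AntitoneOn (gaussianPDFReal 0 1) (Ici 0) := by
  intro s (hs : 0 ≤ s) t _ hst
  simp only [gaussianPDFReal_zero_one]
  gcongr

lemma measureReal_gaussianReal_eq_integral (μ : ℝ) {v : ℝ≥0} (hv : v ≠ 0) (s : Set ℝ) :
    (gaussianReal μ v).real s = ∫ t in s, gaussianPDFReal μ v t := by
  rw [measureReal_def, gaussianReal_apply_eq_integral _ hv,
    ENNReal.toReal_ofReal (setIntegral_nonneg_of_ae (ae_of_all _ (gaussianPDFReal_nonneg μ v)))]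

lemma measure_gaussianReal_pos (μ : ℝ) {v : ℝ≥0} (hv : v ≠ 0) {s : Set ℝ} (hs : volume s ≠ 0) :
    0 < gaussianReal μ v s :=
  pos_iff_ne_zero.2 fun h => hs (gaussianReal_absolutelyContinuous' μ hv h)

lemma Phi_eq_cdf : Phi = cdf (gaussianReal 0 1) := by
  ext z
  simp_rw [cdf_eq_real, measureReal_gaussianReal_eq_integral 0 one_ne_zero,
    gaussianPDFReal_zero_one, Phi]

lemma one_sub_Phi (z : ℝ) : 1 - Phi z = (gaussianReal 0 1).real (Ioi z) := by
  rw [Phi_eq_cdf, cdf_eq_real, ← compl_Iic, measureReal_compl measurableSet_Iic, probReal_univ]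

lemma Phi_lt_one (z : ℝ) : Phi z < 1 := by
  have hpos := measure_gaussianReal_pos 0 one_ne_zero (s := Ioi z) (by simp)
  have : 0 < (gaussianReal 0 1).real (Ioi z) := ENNReal.toReal_pos hpos.ne' (measure_ne_top _ _)
  linarith [one_sub_Phi z]

lemma Phi_strictMono : StrictMono Phi := by
  intro a b hab
  have hpos := measure_gaussianReal_pos 0 one_ne_zero (s := Ioc a b) (by simp [hab])
  rw [← measure_cdf (μ := gaussianReal 0 1), StieltjesFunction.measure_Ioc, ← Phi_eq_cdf,
    ENNReal.ofReal_pos] at hpos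
  linarith

lemma continuous_Phi : Continuous Phi := by
  have hint : Integrable fun t : ℝ => (√(2 * π))⁻¹ * exp (-(t ^ 2) / 2) :=
    funext gaussianPDFReal_zero_one ▸ integrable_gaussianPDFReal 0 1
  refine continuous_iff_continuousAt.2 fun z => ?_
  exact (hint.integrableOn.continuousOn_Iic_primitive_Iic (a₀ := z + 1)).continuousAt
    (Iic_mem_nhds (by linarith))

lemma tendsto_Phi_atTop : Tendsto Phi atTop (𝓝 1) := Phi_eq_cdf ▸ tendsto_cdf_atTop _

lemma nhdsLT_le_map_atTop {f : ℝ → ℝ} {b : ℝ} (hf : Continuous f)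
    (hlim : Tendsto f atTop (𝓝 b)) (hlt : ∀ x, f x < b) : 𝓝[<] b ≤ map f atTop := by
  intro s hs
  obtain ⟨M, hM⟩ := mem_atTop_sets.1 (mem_map.1 hs)
  refine mem_of_superset (Ioo_mem_nhdsLT (hlt M)) fun y hy => ?_
  obtain ⟨N, hN, hMN⟩ := ((hlim.eventually (lt_mem_nhds hy.2)).and (eventually_ge_atTop M)).exists
  obtain ⟨x, hx, rfl⟩ := intermediate_value_Icc hMN hf.continuousOn ⟨hy.1.le, hN.le⟩
  exact hM x hx.1

lemma hasSubgaussianMGF_of_map_eq_gaussianReal {Ω : Type*} [MeasurableSpace Ω] {P : Measure Ω}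
    [IsProbabilityMeasure P] {X : Ω → ℝ} {v : ℝ≥0} (hX : P.map X = gaussianReal 0 v) :
    HasSubgaussianMGF X v P where
  integrable_exp_mul t := mgf_pos_iff.1 (by rw [mgf_gaussianReal hX]; exact exp_pos _)
  mgf_le t := by rw [mgf_gaussianReal hX]; simp

lemma measureReal_gaussianReal_Ioi_le {z : ℝ} (hz : 0 ≤ z) :
    (gaussianReal 0 1).real (Ioi z) ≤ exp (-z ^ 2 / 2) := by
  have := (hasSubgaussianMGF_of_map_eq_gaussianReal (P := gaussianReal 0 1) (X := id)
    Measure.map_id).measure_ge_le hz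
  simpa using (measureReal_mono Ioi_subset_Ici_self).trans this

lemma mul_gaussianPDFReal_le_measureReal_Ioc {a b : ℝ} (ha : 0 ≤ a) (hab : a ≤ b) :
    (b - a) * gaussianPDFReal 0 1 b ≤ (gaussianReal 0 1).real (Ioc a b) := by
  rw [measureReal_gaussianReal_eq_integral 0 one_ne_zero]
  have := setIntegral_ge_of_const_le_real (μ := volume) (s := Ioc a b) measurableSet_Ioc (by simp)
    (fun t ht => gaussianPDFReal_antitoneOn (mem_Ici.2 (ha.trans ht.1.le))
      (mem_Ici.2 (ha.trans hab)) ht.2)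
    (integrable_gaussianPDFReal 0 1).integrableOn
  simpa [hab, mul_comm] using this

lemma gaussianPDFReal_add_one_le_measureReal_Ioi {a : ℝ} (ha : 0 ≤ a) :
    gaussianPDFReal 0 1 (a + 1) ≤ (gaussianReal 0 1).real (Ioi a) := by
  simpa using
    (mul_gaussianPDFReal_le_measureReal_Ioc ha (le_add_of_nonneg_right zero_le_one)).trans
      (measureReal_mono Ioc_subset_Ioi_self)

lemma tendsto_quadratic_div_sq (a b c : ℝ) :
    Tendsto (fun z : ℝ => (a * z ^ 2 + b * z + c) / z ^ 2) atTop (𝓝 a) := by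
  have h : Tendsto (fun z : ℝ => a + b * z⁻¹ + c * z⁻¹ ^ 2) atTop (𝓝 (a + b * 0 + c * 0 ^ 2)) :=
    (tendsto_const_nhds.add (tendsto_inv_atTop_zero.const_mul b)).add
      ((tendsto_inv_atTop_zero.pow 2).const_mul c)
  rw [mul_zero, zero_pow two_ne_zero, mul_zero, add_zero, add_zero] at h
  refine h.congr' ((eventually_ne_atTop 0).mono fun z hz => ?_)
  field_simp

lemma tendsto_log_div_sq_of_exp_bounds {F lo hi : ℝ → ℝ} {a : ℝ}
    (hlo : Tendsto (fun z => lo z / z ^ 2) atTop (𝓝 a))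
    (hhi : Tendsto (fun z => hi z / z ^ 2) atTop (𝓝 a))
    (hFlo : ∀ᶠ z in atTop, exp (lo z) ≤ F z) (hFhi : ∀ᶠ z in atTop, F z ≤ exp (hi z)) :
    Tendsto (fun z => log (F z) / z ^ 2) atTop (𝓝 a) := by
  refine tendsto_of_tendsto_of_tendsto_of_le_of_le' hlo hhi ?_ ?_
  · filter_upwards [hFlo] with z h
    gcongr
    exact (le_log_iff_exp_le ((exp_pos _).trans_le h)).2 h
  · filter_upwards [hFlo, hFhi] with z h₁ h₂
    gcongr
    exact (log_le_iff_le_exp ((exp_pos _).trans_le h₁)).2 h₂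

lemma tendsto_log_measureReal_gaussianReal_Ioi_div_sq :
    Tendsto (fun z => log ((gaussianReal 0 1).real (Ioi z)) / z ^ 2) atTop (𝓝 (-1 / 2)) := by
  refine tendsto_log_div_sq_of_exp_bounds (lo := fun z => -(z + 1) ^ 2 / 2 - log √(2 * π))
    (hi := fun z => -z ^ 2 / 2) ?_ ?_ ?_ ?_
  · exact (tendsto_quadratic_div_sq (-1 / 2) (-1) (-1 / 2 - log √(2 * π))).congr fun z => by ring_nf
  · exact (tendsto_quadratic_div_sq (-1 / 2) 0 0).congr fun z => by ring_nf
  · filter_upwards [eventually_ge_atTop 0] with z hz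
    rw [← gaussianPDFReal_zero_one_eq_exp]
    exact gaussianPDFReal_add_one_le_measureReal_Ioi hz
  · filter_upwards [eventually_ge_atTop 0] with z hz using measureReal_gaussianReal_Ioi_le hz

section GaussianPair

variable {Ω : Type*} [MeasurableSpace Ω] {P : Measure Ω} [IsProbabilityMeasure P] {Z₁ W : Ω → ℝ}
  {ρ : ℝ}

lemma measureReal_lt_and_lt_le_exp (hZ₁ : P.map Z₁ = gaussianReal 0 1)
    (hW : P.map W = gaussianReal 0 1) (hZW : IndepFun Z₁ W P) (hρ : -1 < ρ) (hρ' : ρ ≤ 1)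
    {z : ℝ} (hz : 0 ≤ z) :
    P.real {ω | z < Z₁ ω ∧ z < ρ * Z₁ ω + √(1 - ρ ^ 2) * W ω} ≤ exp (-z ^ 2 / (1 + ρ)) := by
  set s := √(1 - ρ ^ 2)
  have hs : s ^ 2 = 1 - ρ ^ 2 := sq_sqrt (by nlinarith)
  have hsum := ((hasSubgaussianMGF_of_map_eq_gaussianReal hZ₁).const_mul (1 + ρ)).add_of_indepFun
    ((hasSubgaussianMGF_of_map_eq_gaussianReal hW).const_mul s)
    (hZW.comp (measurable_const_mul _) (measurable_const_mul _))
  calc P.real {ω | z < Z₁ ω ∧ z < ρ * Z₁ ω + s * W ω}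
      ≤ P.real {ω | 2 * z ≤ (1 + ρ) * Z₁ ω + s * W ω} :=
        measureReal_mono fun ω ⟨h₁, h₂⟩ => show 2 * z ≤ _ by linarith
    _ ≤ exp (-z ^ 2 / (1 + ρ)) := by
        refine (hsum.measure_ge_le (by positivity)).trans_eq ?_
        change exp (-(2 * z) ^ 2 / (2 * ((1 + ρ) ^ 2 * 1 + s ^ 2 * 1))) = _
        rw [hs, show 2 * ((1 + ρ) ^ 2 * 1 + (1 - ρ ^ 2) * 1) = 2 ^ 2 * (1 + ρ) by ring,
          neg_div, neg_div, mul_pow, mul_div_mul_left _ _ (by norm_num)]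

lemma gaussianPDFReal_mul_le_measureReal_lt_and_lt (hZ₁m : Measurable Z₁) (hWm : Measurable W)
    (hZ₁ : P.map Z₁ = gaussianReal 0 1) (hW : P.map W = gaussianReal 0 1)
    (hZW : IndepFun Z₁ W P) (hρ : ρ ∈ Ioo (-1 : ℝ) 1) {z : ℝ} (hz : 0 ≤ z) :
    gaussianPDFReal 0 1 (z + 1) *
        gaussianPDFReal 0 1 ((1 - ρ) / √(1 - ρ ^ 2) * z + (√(1 - ρ ^ 2))⁻¹ + 1) ≤
      P.real {ω | z < Z₁ ω ∧ z < ρ * Z₁ ω + √(1 - ρ ^ 2) * W ω} := by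
  obtain ⟨hρ₁, hρ₂⟩ := hρ
  set s := √(1 - ρ ^ 2)
  have hs : 0 < s := sqrt_pos.2 (by nlinarith)
  set y := (1 - ρ) / s * z + s⁻¹
  have hy : 0 ≤ y := by positivity
  have hsy : s * y = (1 - ρ) * z + 1 := by simp only [y]; field_simp
  have hsub : Z₁ ⁻¹' Ioc z (z + 1) ∩ W ⁻¹' Ioi y ⊆
      {ω | z < Z₁ ω ∧ z < ρ * Z₁ ω + s * W ω} := by
    rintro ω ⟨⟨hz₁, hz₁'⟩, hw⟩
    refine ⟨hz₁, ?_⟩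
    have hsw : s * y < s * W ω := mul_lt_mul_of_pos_left hw hs
    have hρZ : ρ * z - 1 ≤ ρ * Z₁ ω := by
      rcases le_total 0 ρ with h | h <;> nlinarith
    linarith
  have hZ₁_mass : gaussianPDFReal 0 1 (z + 1) ≤ (gaussianReal 0 1).real (Ioc z (z + 1)) := by
    simpa using mul_gaussianPDFReal_le_measureReal_Ioc hz (le_add_of_nonneg_right zero_le_one)
  calc gaussianPDFReal 0 1 (z + 1) * gaussianPDFReal 0 1 (y + 1)
      ≤ (gaussianReal 0 1).real (Ioc z (z + 1)) * (gaussianReal 0 1).real (Ioi y) :=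
        mul_le_mul hZ₁_mass (gaussianPDFReal_add_one_le_measureReal_Ioi hy)
          (gaussianPDFReal_nonneg _ _ _) measureReal_nonneg
    _ = P.real (Z₁ ⁻¹' Ioc z (z + 1) ∩ W ⁻¹' Ioi y) := by
        simp only [measureReal_def]
        rw [hZW.measure_inter_preimage_eq_mul _ _ measurableSet_Ioc measurableSet_Ioi,
          ENNReal.toReal_mul, ← Measure.map_apply hZ₁m measurableSet_Ioc,
          ← Measure.map_apply hWm measurableSet_Ioi, hZ₁, hW]
    _ ≤ _ := measureReal_mono hsub

lemma tendsto_log_measureReal_lt_and_lt_div_sq (hZ₁m : Measurable Z₁) (hWm : Measurable W)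
    (hZ₁ : P.map Z₁ = gaussianReal 0 1) (hW : P.map W = gaussianReal 0 1)
    (hZW : IndepFun Z₁ W P) (hρ : ρ ∈ Ioo (-1 : ℝ) 1) :
    Tendsto (fun z => log (P.real {ω | z < Z₁ ω ∧ z < ρ * Z₁ ω + √(1 - ρ ^ 2) * W ω}) / z ^ 2)
      atTop (𝓝 (-1 / (1 + ρ))) := by
  obtain ⟨hρ₁, hρ₂⟩ := hρ
  set s := √(1 - ρ ^ 2)
  set c := (1 - ρ) / s
  have hc : 1 + c ^ 2 = 2 / (1 + ρ) := by
    have hs : s ^ 2 = (1 - ρ) * (1 + ρ) := by rw [sq_sqrt (by nlinarith)]; ring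
    have : 1 - ρ ≠ 0 := by linarith
    have : 1 + ρ ≠ 0 := by linarith
    rw [div_pow, hs]
    field_simp
    ring
  refine tendsto_log_div_sq_of_exp_bounds
    (lo := fun z => -(z + 1) ^ 2 / 2 - log √(2 * π) + (-(c * z + s⁻¹ + 1) ^ 2 / 2 - log √(2 * π)))
    (hi := fun z => -z ^ 2 / (1 + ρ)) ?_ ?_ ?_ ?_
  · convert tendsto_quadratic_div_sq (-(1 + c ^ 2) / 2) (-1 - c * (s⁻¹ + 1))
      (-1 / 2 - (s⁻¹ + 1) ^ 2 / 2 - 2 * log √(2 * π)) using 1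
    · ext z; ring
    · rw [hc]; ring_nf
  · exact (tendsto_quadratic_div_sq (-1 / (1 + ρ)) 0 0).congr fun z => by ring
  · filter_upwards [eventually_ge_atTop 0] with z hz
    rw [exp_add, ← gaussianPDFReal_zero_one_eq_exp, ← gaussianPDFReal_zero_one_eq_exp]
    exact gaussianPDFReal_mul_le_measureReal_lt_and_lt hZ₁m hWm hZ₁ hW hZW ⟨hρ₁, hρ₂⟩ hz
  · filter_upwards [eventually_ge_atTop 0] with z hz
    exact measureReal_lt_and_lt_le_exp hZ₁ hW hZW hρ₁ hρ₂.le hz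

end GaussianPair

/-- For a bivariate standard Gaussian pair `(Z₁, Z₂)` with correlation
`ρ ∈ (-1,1)`, `lim_{u→1⁻} log P(Φ(Z₁) > u, Φ(Z₂) > u) / log(1-u) = 2/(1+ρ)`: the
coefficient of tail dependence of the Gaussian pair is `η_Z = (1+ρ)/2`. -/
theorem gaussian_coefficient_of_tail_dependence
    {Ω : Type*} [MeasurableSpace Ω] (P : Measure Ω) [IsProbabilityMeasure P]
    (Z₁ W : Ω → ℝ) (hZ₁m : Measurable Z₁) (hWm : Measurable W)
    (hZ₁ : Measure.map Z₁ P = gaussianReal 0 1)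
    (hW : Measure.map W P = gaussianReal 0 1)
    (hZW : IndepFun Z₁ W P)
    (ρ : ℝ) (hρ : ρ ∈ Set.Ioo (-1 : ℝ) 1)
    (Z₂ : Ω → ℝ) (hZ₂ : ∀ ω, Z₂ ω = ρ * Z₁ ω + Real.sqrt (1 - ρ ^ 2) * W ω) :
    Tendsto
      (fun u => Real.log (P {ω | u < Phi (Z₁ ω) ∧ u < Phi (Z₂ ω)}).toReal /
        Real.log (1 - u))
      (nhdsWithin 1 (Set.Iio 1)) (nhds (2 / (1 + ρ))) := by
  obtain rfl : Z₂ = fun ω => ρ * Z₁ ω + √(1 - ρ ^ 2) * W ω := funext hZ₂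
  have hlim : Tendsto (fun z => log (P.real {ω | z < Z₁ ω ∧ z < ρ * Z₁ ω + √(1 - ρ ^ 2) * W ω}) /
      log ((gaussianReal 0 1).real (Ioi z))) atTop (𝓝 (2 / (1 + ρ))) := by
    have hρ' : 1 + ρ ≠ 0 := by linarith [hρ.1]
    have h := (tendsto_log_measureReal_lt_and_lt_div_sq hZ₁m hWm hZ₁ hW hZW hρ).div
      tendsto_log_measureReal_gaussianReal_Ioi_div_sq (by norm_num)
    rw [show -1 / (1 + ρ) / (-1 / 2) = 2 / (1 + ρ) by field_simp] at h
    exact h.congr' ((eventually_ne_atTop 0).mono fun z hz =>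
      div_div_div_cancel_right₀ (pow_ne_zero 2 hz) _ _)
  refine (tendsto_map'_iff.2 ?_).mono_left
    (nhdsLT_le_map_atTop continuous_Phi tendsto_Phi_atTop Phi_lt_one)
  refine hlim.congr fun z => ?_
  simp only [Function.comp_apply, Phi_strictMono.lt_iff_lt, one_sub_Phi, measureReal_def]
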